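/- arXiv:quant-ph/0610124 — 8 statements merged into one kernel-verified Lean document; each statement's English description precedes it below -/
import Mathlib

section
/- Let k ≥ 1 and let (Ω, P) be a probability space carrying an i.i.d. sequence X₁, X₂, … of random k×k complex matrices such that almost surely each Xₘ is Hermitian with trace 1 and ‖Xₘ‖ ≤ K for some constant K > 0. Suppose the expectation E[X₁] = ρ is an invertible (i.e. positive definite) density matrix. Then there exist constants C > 0 and E > 0 such that for every n ≥ 1, P( (1/n)(X₁ + ⋯ + Xₙ) is not positive semidefinite ) ≤ C·exp(−n·E). In words: the probability that the unbiased unconstrained estimate is not a density matrix converges exponentially to 0. -/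
/-!
Hermitian matrices entrywise close to the positive definite `ρ` are positive definite: the
quadratic form of `ρ` is bounded below on the compact unit sphere, uniformly for nearby matrices,
and homogeneity gives positivity everywhere. Almost surely the sample mean is Hermitian, so it can
fail to be positive semidefinite only if the real or imaginary part of one of its finitely many
entries deviates from that of `ρ` by a fixed amount, and Hoeffding's inequality makes each such
event exponentially unlikely.
-/

open MeasureTheory ProbabilityTheory
open scoped ComplexOrder

/-- Matrices are measurable entrywise (the product σ-algebra of `m → n → ℂ`). -/
noncomputable instance matrixMeasurableSpaceStmt0 {m n : Type*} : MeasurableSpace (Matrix m n ℂ) :=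
  inferInstanceAs (MeasurableSpace (m → n → ℂ))

open Filter Topology Real
open scoped Matrix

namespace Matrix

theorem re_star_smul_dotProduct_mulVec_smul {n 𝕜 : Type*} [Fintype n] [RCLike 𝕜]
    (S : Matrix n n 𝕜) (r : ℝ) (u : n → 𝕜) :
    RCLike.re (star ((r : 𝕜) • u) ⬝ᵥ S *ᵥ ((r : 𝕜) • u)) =
      r ^ 2 * RCLike.re (star u ⬝ᵥ S *ᵥ u) := by
  simp only [mulVec_smul, dotProduct_smul, star_smul, smul_dotProduct, smul_eq_mul,
    RCLike.star_def, RCLike.conj_ofReal]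
  rw [← mul_assoc, ← RCLike.ofReal_mul, RCLike.re_ofReal_mul, sq]

theorem PosDef.eventually_isHermitian_imp_posDef {n 𝕜 : Type*} [Fintype n] [RCLike 𝕜]
    {ρ : Matrix n n 𝕜} (hρ : ρ.PosDef) : ∀ᶠ S in 𝓝 ρ, S.IsHermitian → S.PosDef := by
  have hcont : Continuous fun p : Matrix n n 𝕜 × (n → 𝕜) ↦
      RCLike.re (star p.2 ⬝ᵥ p.1 *ᵥ p.2) := by
    fun_prop
  have hsphere : ∀ᶠ S in 𝓝 ρ, ∀ u ∈ Metric.sphere (0 : n → 𝕜) 1,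
      0 < RCLike.re (star u ⬝ᵥ S *ᵥ u) :=
    (isCompact_sphere 0 1).eventually_forall_of_forall_eventually fun u hu ↦
      continuousAt_const.eventually_lt hcont.continuousAt
        (hρ.re_dotProduct_pos (ne_zero_of_mem_sphere one_ne_zero ⟨u, hu⟩))
  filter_upwards [hsphere] with S hS hherm
  refine .of_dotProduct_mulVec_pos hherm fun x hx ↦
    RCLike.pos_iff.2 ⟨?_, hherm.im_star_dotProduct_mulVec_self x⟩
  have hnorm : ‖x‖ ≠ 0 := norm_ne_zero_iff.2 hx
  have hu : (‖x‖⁻¹ : 𝕜) • x ∈ Metric.sphere (0 : n → 𝕜) 1 := by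
    simp [norm_smul, hnorm]
  have hx_eq : x = ((‖x‖ : ℝ) : 𝕜) • (‖x‖⁻¹ : 𝕜) • x := by
    rw [smul_smul, ← RCLike.ofReal_inv, ← RCLike.ofReal_mul, mul_inv_cancel₀ hnorm,
      RCLike.ofReal_one, one_smul]
  rw [hx_eq, re_star_smul_dotProduct_mulVec_smul]
  exact mul_pos (by positivity) (hS _ hu)

theorem PosDef.exists_forall_norm_sub_lt_imp_posDef {n 𝕜 : Type*} [Fintype n] [RCLike 𝕜]
    {ρ : Matrix n n 𝕜} (hρ : ρ.PosDef) :
    ∃ ε > 0, ∀ S : Matrix n n 𝕜, S.IsHermitian → (∀ i j, ‖S i j - ρ i j‖ < ε) → S.PosDef := by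
  obtain ⟨ε, hε, h⟩ :=
    (Metric.eventually_nhds_iff (α := n → n → 𝕜)).1 hρ.eventually_isHermitian_imp_posDef
  refine ⟨ε, hε, fun S hS hclose ↦ h ?_ hS⟩
  refine (dist_pi_lt_iff hε).2 fun i ↦ (dist_pi_lt_iff hε).2 fun j ↦ ?_
  simpa [dist_eq_norm] using hclose i j

theorem norm_inv_natCast_smul_sum_range_apply_sub {ι κ : Type*} (A : ℕ → Matrix ι κ ℂ)
    (B : Matrix ι κ ℂ) {n : ℕ} (hn : n ≠ 0) (i : ι) (j : κ) :
    ‖((n : ℂ)⁻¹ • ∑ m ∈ Finset.range n, A m) i j - B i j‖ =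
      ‖∑ m ∈ Finset.range n, (A m i j - B i j)‖ / n := by
  have hn' : (n : ℂ) ≠ 0 := Nat.cast_ne_zero.2 hn
  have hentry : ((n : ℂ)⁻¹ • ∑ m ∈ Finset.range n, A m) i j - B i j =
      (n : ℂ)⁻¹ * ∑ m ∈ Finset.range n, (A m i j - B i j) := by
    simp [sum_apply, Finset.sum_sub_distrib, mul_sub, hn']
  rw [hentry, norm_mul, norm_inv, Complex.norm_natCast, inv_mul_eq_div]

theorem measurable_apply_apply {ι κ : Type*} (i : ι) (j : κ) :
    Measurable fun M : Matrix ι κ ℂ ↦ M i j :=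
  (measurable_pi_apply j).comp (measurable_pi_apply i)

end Matrix

section Hoeffding

variable {Ω : Type*} [MeasurableSpace Ω] {P : Measure Ω} [IsProbabilityMeasure P]

theorem measureReal_sum_range_sub_ge_le {Y : ℕ → Ω → ℝ} (hY : ∀ m, Measurable (Y m))
    (hindep : iIndepFun Y P) {y K : ℝ} (hmean : ∀ m, P[Y m] = y)
    (hbdd : ∀ m, ∀ᵐ ω ∂P, |Y m ω| ≤ K) {ε : ℝ} (hε : 0 ≤ ε) (n : ℕ) :
    P.real {ω | n * ε ≤ ∑ m ∈ Finset.range n, (Y m ω - y)} ≤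
      exp (-n * (ε ^ 2 / (2 * K ^ 2))) := by
  have hsubG : ∀ m, HasSubgaussianMGF (fun ω ↦ Y m ω - y) ((‖K - -K‖₊ / 2) ^ 2) P := fun m ↦ by
    simpa only [hmean m] using hasSubgaussianMGF_of_mem_Icc (hY m).aemeasurable
      ((hbdd m).mono fun ω ↦ abs_le.1)
  have hindep' : iIndepFun (fun m ω ↦ Y m ω - y) P :=
    hindep.comp (fun _ ↦ (· - y)) fun _ ↦ measurable_id.sub_const y
  refine (HasSubgaussianMGF.measure_sum_range_ge_le_of_iIndepFun hindep' (fun m _ ↦ hsubG m)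
    (by positivity)).trans_eq ?_
  have hparam : (|K - -K| / 2) ^ 2 = K ^ 2 := by
    rw [sub_neg_eq_add, ← two_mul, abs_mul, abs_two, mul_div_cancel_left₀ _ two_ne_zero, sq_abs]
  rcases n.eq_zero_or_pos with rfl | hn
  · simp
  simp only [NNReal.coe_pow, NNReal.coe_div, coe_nnnorm, Real.norm_eq_abs, NNReal.coe_ofNat, hparam]
  rw [show -(n * ε) ^ 2 = n * (-n * ε ^ 2) by ring, show 2 * n * K ^ 2 = n * (2 * K ^ 2) by ring,
    mul_div_mul_left _ _ (by positivity), mul_div_assoc]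

theorem measureReal_abs_sum_range_sub_ge_le {Y : ℕ → Ω → ℝ} (hY : ∀ m, Measurable (Y m))
    (hindep : iIndepFun Y P) {y K : ℝ} (hmean : ∀ m, P[Y m] = y)
    (hbdd : ∀ m, ∀ᵐ ω ∂P, |Y m ω| ≤ K) {ε : ℝ} (hε : 0 ≤ ε) (n : ℕ) :
    P.real {ω | n * ε ≤ |∑ m ∈ Finset.range n, (Y m ω - y)|} ≤
      2 * exp (-n * (ε ^ 2 / (2 * K ^ 2))) := by
  have hupper := measureReal_sum_range_sub_ge_le hY hindep hmean hbdd hε n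
  have hlower := measureReal_sum_range_sub_ge_le (Y := fun m ω ↦ -Y m ω) (y := -y)
    (fun m ↦ (hY m).neg) (hindep.comp (fun _ ↦ Neg.neg) fun _ ↦ measurable_neg)
    (fun m ↦ by rw [integral_neg, hmean m]) (fun m ↦ by simpa only [abs_neg] using hbdd m) hε n
  have hsplit : {ω | n * ε ≤ |∑ m ∈ Finset.range n, (Y m ω - y)|} ⊆
      {ω | n * ε ≤ ∑ m ∈ Finset.range n, (Y m ω - y)} ∪
        {ω | n * ε ≤ ∑ m ∈ Finset.range n, (-Y m ω - -y)} := fun ω hω ↦ by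
    have hneg : ∑ m ∈ Finset.range n, (-Y m ω - -y) = -∑ m ∈ Finset.range n, (Y m ω - y) := by
      rw [← Finset.sum_neg_distrib]; simp only [neg_sub_neg, neg_sub]
    rcases le_abs'.1 (show (n : ℝ) * ε ≤ |_| from hω) with h | h
    · exact Or.inr (show (n : ℝ) * ε ≤ _ by rw [hneg]; linarith)
    · exact Or.inl h
  calc _ ≤ _ := measureReal_mono hsplit
    _ ≤ _ := measureReal_union_le _ _
    _ ≤ _ := by linarith

theorem measureReal_norm_sum_range_sub_ge_le {Z : ℕ → Ω → ℂ} (hZ : ∀ m, Measurable (Z m))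
    (hindep : iIndepFun Z P) {z : ℂ} {K : ℝ} (hmean : ∀ m, P[Z m] = z)
    (hbdd : ∀ m, ∀ᵐ ω ∂P, ‖Z m ω‖ ≤ K) {ε : ℝ} (hε : 0 ≤ ε) (n : ℕ) :
    P.real {ω | n * ε ≤ ‖∑ m ∈ Finset.range n, (Z m ω - z)‖} ≤
      4 * exp (-n * (ε ^ 2 / (8 * K ^ 2))) := by
  have hint : ∀ m, Integrable (Z m) P := fun m ↦
    (integrable_const K).mono' (hZ m).aestronglyMeasurable (by simpa using hbdd m)
  have hpart : ∀ f : ℂ → ℝ, Measurable f → (∀ w, |f w| ≤ ‖w‖) →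
      (∀ m, P[fun ω ↦ f (Z m ω)] = f z) →
      P.real {ω | n * (ε / 2) ≤ |∑ m ∈ Finset.range n, (f (Z m ω) - f z)|} ≤
        2 * exp (-n * (ε ^ 2 / (8 * K ^ 2))) := fun f hf hfle hfmean ↦ by
    refine (measureReal_abs_sum_range_sub_ge_le (fun m ↦ hf.comp (hZ m))
      (hindep.comp (fun _ ↦ f) fun _ ↦ hf) hfmean
      (fun m ↦ (hbdd m).mono fun ω h ↦ (hfle _).trans h) (by positivity) n).trans_eq ?_
    ring_nf
  have hre := hpart Complex.re Complex.measurable_re Complex.abs_re_le_norm fun m ↦ by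
    rw [← hmean m]; exact integral_re (hint m)
  have him := hpart Complex.im Complex.measurable_im Complex.abs_im_le_norm fun m ↦ by
    rw [← hmean m]; exact integral_im (hint m)
  have hsplit : {ω | n * ε ≤ ‖∑ m ∈ Finset.range n, (Z m ω - z)‖} ⊆
      {ω | n * (ε / 2) ≤ |∑ m ∈ Finset.range n, ((Z m ω).re - z.re)|} ∪
        {ω | n * (ε / 2) ≤ |∑ m ∈ Finset.range n, ((Z m ω).im - z.im)|} := fun ω hω ↦ by
    have := (Complex.norm_le_abs_re_add_abs_im _).trans' hω
    simp only [Set.mem_ofPred_eq, Set.mem_union, Complex.re_sum, Complex.im_sum, Complex.sub_re,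
      Complex.sub_im] at this ⊢
    by_contra! h
    linarith
  calc _ ≤ _ := measureReal_mono hsplit
    _ ≤ _ := measureReal_union_le _ _
    _ ≤ _ := by linarith

theorem measureReal_exists_norm_sum_range_sub_apply_ge_le {ι κ : Type*} [Fintype ι] [Fintype κ]
    {X : ℕ → Ω → Matrix ι κ ℂ} (hX : ∀ m, Measurable (X m)) (hindep : iIndepFun X P)
    {ρ : Matrix ι κ ℂ} {K : ℝ} (hmean : ∀ m i j, ∫ ω, X m ω i j ∂P = ρ i j)
    (hbdd : ∀ m, ∀ᵐ ω ∂P, ∀ i j, ‖X m ω i j‖ ≤ K) {ε : ℝ} (hε : 0 ≤ ε) (n : ℕ) :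
    P.real {ω | ∃ i j, n * ε ≤ ‖∑ m ∈ Finset.range n, (X m ω i j - ρ i j)‖} ≤
      4 * (Fintype.card ι * Fintype.card κ) * exp (-n * (ε ^ 2 / (8 * K ^ 2))) := by
  have hbound : ∀ i j, P.real {ω | n * ε ≤ ‖∑ m ∈ Finset.range n, (X m ω i j - ρ i j)‖} ≤
      4 * exp (-n * (ε ^ 2 / (8 * K ^ 2))) := fun i j ↦
    measureReal_norm_sum_range_sub_ge_le ((Matrix.measurable_apply_apply i j).comp <| hX ·)
      (hindep.comp (fun _ M ↦ M i j) fun _ ↦ Matrix.measurable_apply_apply i j)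
      (hmean · i j) (fun m ↦ (hbdd m).mono fun ω h ↦ h i j) hε n
  have hunion : {ω | ∃ i j, n * ε ≤ ‖∑ m ∈ Finset.range n, (X m ω i j - ρ i j)‖} =
      ⋃ i, ⋃ j, {ω | n * ε ≤ ‖∑ m ∈ Finset.range n, (X m ω i j - ρ i j)‖} := by
    ext; simp
  calc _ ≤ ∑ i, ∑ j, P.real {ω | n * ε ≤ ‖∑ m ∈ Finset.range n, (X m ω i j - ρ i j)‖} := by
        rw [hunion]
        exact (measureReal_iUnion_fintype_le _).trans
          (Finset.sum_le_sum fun i _ ↦ measureReal_iUnion_fintype_le _)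
    _ ≤ ∑ _i : ι, ∑ _j : κ, 4 * exp (-n * (ε ^ 2 / (8 * K ^ 2))) :=
        Finset.sum_le_sum fun i _ ↦ Finset.sum_le_sum fun j _ ↦ hbound i j
    _ = _ := by simp only [Finset.sum_const, Finset.card_univ, nsmul_eq_mul]; ring

end Hoeffding

theorem unconstrained_estimate_exponentially_density_general {k : ℕ} (hk : 1 ≤ k)
    {Ω : Type*} [MeasurableSpace Ω] (P : Measure Ω) [IsProbabilityMeasure P]
    (X : ℕ → Ω → Matrix (Fin k) (Fin k) ℂ)
    (hmeas : ∀ m, Measurable (X m))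
    (hindep : iIndepFun X P)
    (hident : ∀ m, Measure.map (X m) P = Measure.map (X 0) P)
    (K : ℝ) (hK : 0 < K)
    (hbdd : ∀ᵐ ω ∂P, ∀ m, (X m ω).IsHermitian ∧ (X m ω).trace = 1 ∧
      ∀ i j, ‖X m ω i j‖ ≤ K)
    (ρ : Matrix (Fin k) (Fin k) ℂ) (hρ : ρ.PosDef)
    (hmean : ∀ i j, ∫ ω, X 0 ω i j ∂P = ρ i j) :
    ∃ C > 0, ∃ E > 0, ∀ n : ℕ, 1 ≤ n →
      P {ω | ¬ ((n : ℂ)⁻¹ • ∑ m ∈ Finset.range n, X m ω).PosSemidef} ≤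
        ENNReal.ofReal (C * Real.exp (-(n : ℝ) * E)) := by
  obtain ⟨ε, hε, hposDef⟩ := hρ.exists_forall_norm_sub_lt_imp_posDef
  have hmean_all : ∀ m i j, ∫ ω, X m ω i j ∂P = ρ i j := fun m i j ↦ by
    rw [← hmean i j]
    exact ((IdentDistrib.mk (hmeas m).aemeasurable (hmeas 0).aemeasurable (hident m)).comp
      (Matrix.measurable_apply_apply i j)).integral_eq
  refine ⟨4 * (k * k), by positivity, ε ^ 2 / (8 * K ^ 2), by positivity, fun n hn ↦ ?_⟩
  have hn' : (0 : ℝ) < n := by exact_mod_cast hn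
  have hdeviation : {ω | ¬ ((n : ℂ)⁻¹ • ∑ m ∈ Finset.range n, X m ω).PosSemidef} ≤ᵐ[P]
      {ω | ∃ i j, (n : ℝ) * ε ≤ ‖∑ m ∈ Finset.range n, (X m ω i j - ρ i j)‖} := by
    filter_upwards [hbdd] with ω hω (hbad : ¬ Matrix.PosSemidef _)
    show ∃ i j, _
    by_contra! hclose
    refine hbad (hposDef _ ?_ fun i j ↦ ?_).posSemidef
    · exact (IsSelfAdjoint.natCast (R := ℂ) n).inv₀.smul (isSelfAdjoint_sum _ fun m _ ↦ (hω m).1)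
    · rw [Matrix.norm_inv_natCast_smul_sum_range_apply_sub _ _ (by omega), div_lt_iff₀' hn']
      exact hclose i j
  calc _ ≤ _ := measure_mono_ae hdeviation
    _ = ENNReal.ofReal (P.real _) := (ofReal_measureReal).symm
    _ ≤ _ := ENNReal.ofReal_le_ofReal <| by
      simpa using measureReal_exists_norm_sum_range_sub_apply_ge_le hmeas hindep hmean_all
        (fun m ↦ hbdd.mono fun ω h ↦ (h m).2.2) hε.le n

/-- for an i.i.d. sequence of bounded random Hermitian trace-one `k×k` matrices
whose common expectation `ρ` is an invertible density matrix (positive definite), the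
probability that the sample mean (the unbiased unconstrained estimate) is not positive
semidefinite, i.e. not a density matrix, decays exponentially: it is `≤ C·exp(−nE)` for some
constants `C, E > 0`. -/
theorem unconstrained_estimate_exponentially_density {k : ℕ} (hk : 1 ≤ k)
    {Ω : Type*} [MeasurableSpace Ω] (P : Measure Ω) [IsProbabilityMeasure P]
    (X : ℕ → Ω → Matrix (Fin k) (Fin k) ℂ)
    (hmeas : ∀ m, Measurable (X m))
    (hindep : iIndepFun X P)
    (hident : ∀ m, Measure.map (X m) P = Measure.map (X 0) P)
    (K : ℝ) (hK : 0 < K)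
    (hbdd : ∀ᵐ ω ∂P, ∀ m, (X m ω).IsHermitian ∧ (X m ω).trace = 1 ∧
      ∀ i j, ‖X m ω i j‖ ≤ K)
    (ρ : Matrix (Fin k) (Fin k) ℂ) (hρ : ρ.PosDef) (hρtr : ρ.trace = 1)
    (hmean : ∀ i j, ∫ ω, X 0 ω i j ∂P = ρ i j) :
    ∃ C > 0, ∃ E > 0, ∀ n : ℕ, 1 ≤ n →
      P {ω | ¬ ((n : ℂ)⁻¹ • ∑ m ∈ Finset.range n, X m ω).PosSemidef} ≤
        ENNReal.ofReal (C * Real.exp (-(n : ℝ) * E)) :=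
  unconstrained_estimate_exponentially_density_general hk P X hmeas hindep hident K hK hbdd ρ hρ
    hmean
end

section
/- Let H be a finite-dimensional real inner product space, D ⊆ H a nonempty closed convex set, and proj_D : H → D the metric projection onto D (the unique nearest point map). Let (Xₙ) be a sequence of random variables with values in H such that ‖Xₙ‖ ≤ K almost surely for a constant K > 0, E[Xₙ] = μ ∈ D for every n (unbiasedness), and dist(Xₙ, D) → 0 in probability as n → ∞ (i.e. for every ε > 0, P(dist(Xₙ, D) > ε) → 0). Then E[proj_D(Xₙ)] → μ as n → ∞; that is, the projected (constrained) estimator is asymptotically unbiased. -/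
/-!
Since `E[Xₙ] = μ`, the bias `E[proj Xₙ] - μ` is the expectation of the error `proj Xₙ - Xₙ`,
whose norm is `dist(Xₙ, D) ≤ ‖Xₙ - μ‖ ≤ K + ‖μ‖`. A uniformly bounded sequence tending to `0` in
probability tends to `0` in `L¹` (Vitali), so the bias vanishes. Convexity of `D` makes `proj`
`1`-Lipschitz, so that `proj ∘ Xₙ` is measurable.
-/

open MeasureTheory Filter Topology RealInnerProductSpace

def IsNearestPointMap {H : Type*} [SeminormedAddCommGroup H] (D : Set H) (proj : H → H) : Prop :=
  ∀ x : H, proj x ∈ D ∧ ∀ y ∈ D, ‖x - proj x‖ ≤ ‖x - y‖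

namespace IsNearestPointMap

variable {H : Type*} {D : Set H} {proj : H → H}

section Seminormed

variable [SeminormedAddCommGroup H]

lemma mem (h : IsNearestPointMap D proj) (x : H) : proj x ∈ D := (h x).1

lemma norm_sub_le (h : IsNearestPointMap D proj) (x : H) {y : H} (hy : y ∈ D) :
    ‖x - proj x‖ ≤ ‖x - y‖ :=
  (h x).2 y hy

lemma norm_sub_eq_iInf (h : IsNearestPointMap D proj) (x : H) : ‖x - proj x‖ = ⨅ y : D, ‖x - y‖ :=
  have : Nonempty D := ⟨⟨proj x, h.mem x⟩⟩
  le_antisymm (le_ciInf fun y => h.norm_sub_le x y.2)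
    (ciInf_le ⟨0, Set.forall_mem_range.2 fun _ => norm_nonneg _⟩ (⟨proj x, h.mem x⟩ : D))

lemma infDist_eq (h : IsNearestPointMap D proj) (x : H) : Metric.infDist x D = ‖x - proj x‖ := by
  simp only [Metric.infDist_eq_iInf, dist_eq_norm, h.norm_sub_eq_iInf x]

end Seminormed

variable [NormedAddCommGroup H] [InnerProductSpace ℝ H]

lemma inner_sub_le_zero (h : IsNearestPointMap D proj) (hD : Convex ℝ D) (x : H) {w : H}
    (hw : w ∈ D) :
    ⟪x - proj x, w - proj x⟫ ≤ 0 :=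
  (norm_eq_iInf_iff_real_inner_le_zero hD (h.mem x)).1 (h.norm_sub_eq_iInf x) w hw

lemma lipschitzWith_one (h : IsNearestPointMap D proj) (hD : Convex ℝ D) :
    LipschitzWith 1 proj := by
  refine LipschitzWith.of_dist_le_mul fun x y => ?_
  rw [NNReal.coe_one, one_mul, dist_eq_norm, dist_eq_norm]
  have hx := h.inner_sub_le_zero hD x (h.mem y)
  have hy := h.inner_sub_le_zero hD y (h.mem x)
  have key : ‖proj x - proj y‖ ^ 2 ≤ ⟪x - y, proj x - proj y⟫ := by
    rw [← real_inner_self_eq_norm_sq]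
    simp only [inner_sub_left, inner_sub_right, real_inner_comm] at hx hy ⊢
    linarith
  have := real_inner_le_norm (x - y) (proj x - proj y)
  nlinarith [norm_nonneg (x - y), norm_nonneg (proj x - proj y)]

end IsNearestPointMap

namespace MeasureTheory

variable {α E : Type*} [MeasurableSpace α] {μ : Measure α} [NormedAddCommGroup E]

lemma unifIntegrable_of_ae_norm_le {ι : Type*} {p : ENNReal} (hp : 1 ≤ p) (hp' : p ≠ ⊤)
    {f : ι → α → E} {C : ℝ} (hf : ∀ i, AEStronglyMeasurable (f i) μ)
    (hC : ∀ i, ∀ᵐ x ∂μ, ‖f i x‖ ≤ C) : UnifIntegrable f p μ := by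
  refine unifIntegrable_of hp hp' hf fun ε hε => ⟨(C + 1).toNNReal, fun i => ?_⟩
  have hzero : {x | (C + 1).toNNReal ≤ ‖f i x‖₊}.indicator (f i) =ᵐ[μ] 0 := by
    filter_upwards [hC i] with x hx
    refine Set.indicator_of_notMem (fun hle => ?_) _
    have : C + 1 ≤ ‖f i x‖ := by simpa using (Real.toNNReal_le_iff_le_coe).1 hle
    linarith
  rw [eLpNorm_congr_ae hzero, eLpNorm_zero]
  exact zero_le

lemma tendstoInMeasure_of_tendsto_measure_lt {ι : Type*} {l : Filter ι} {f : ι → α → E}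
    {g : α → E} (h : ∀ ε > 0, Tendsto (fun i => μ {x | ε < ‖f i x - g x‖}) l (𝓝 0)) :
    TendstoInMeasure μ f l g := by
  refine tendstoInMeasure_iff_norm.2 fun ε hε => ?_
  refine tendsto_of_tendsto_of_tendsto_of_le_of_le tendsto_const_nhds (h (ε / 2) (half_pos hε))
    (fun _ => zero_le) fun i => measure_mono fun x (hx : ε ≤ _) => ?_
  show ε / 2 < _
  linarith

variable [NormedSpace ℝ E] [IsFiniteMeasure μ]

theorem tendsto_integral_of_tendstoInMeasure_of_ae_norm_le {f : ℕ → α → E} {g : α → E} {C : ℝ}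
    (hf : ∀ n, AEStronglyMeasurable (f n) μ) (hC : ∀ n, ∀ᵐ x ∂μ, ‖f n x‖ ≤ C)
    (hg : Integrable g μ) (hfg : TendstoInMeasure μ f atTop g) :
    Tendsto (fun n => ∫ x, f n x ∂μ) atTop (𝓝 (∫ x, g x ∂μ)) :=
  tendsto_integral_of_L1' g hg.1 (.of_forall fun n => Integrable.of_bound (hf n) C (hC n)) <|
    tendsto_Lp_finite_of_tendstoInMeasure le_rfl ENNReal.one_ne_top hf
      (memLp_one_iff_integrable.2 hg) (unifIntegrable_of_ae_norm_le le_rfl ENNReal.one_ne_top hf hC)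
      hfg

end MeasureTheory

theorem constrained_estimator_asymptotically_unbiased_general
    {H : Type*} [NormedAddCommGroup H] [InnerProductSpace ℝ H] [FiniteDimensional ℝ H]
    [MeasurableSpace H] [BorelSpace H]
    (D : Set H) (hDconvex : Convex ℝ D)
    (proj : H → H)
    (hproj : ∀ x : H, proj x ∈ D ∧ ∀ y ∈ D, ‖x - proj x‖ ≤ ‖x - y‖)
    {Ω : Type*} [MeasurableSpace Ω] (P : Measure Ω) [IsProbabilityMeasure P]
    (X : ℕ → Ω → H) (hmeas : ∀ n, Measurable (X n))
    (K : ℝ) (hbound : ∀ n, ∀ᵐ ω ∂P, ‖X n ω‖ ≤ K)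
    (μ : H) (hμ : μ ∈ D) (hunbiased : ∀ n, ∫ ω, X n ω ∂P = μ)
    (hdist : ∀ ε > 0,
      Tendsto (fun n => P {ω | ε < Metric.infDist (X n ω) D}) atTop (nhds 0)) :
    Tendsto (fun n => ∫ ω, proj (X n ω) ∂P) atTop (nhds μ) := by
  have hP : IsNearestPointMap D proj := hproj
  set err : ℕ → Ω → H := fun n ω => proj (X n ω) - X n ω with herr
  have herr_meas n : AEStronglyMeasurable (err n) P :=
    (((hP.lipschitzWith_one hDconvex).continuous.measurable.comp (hmeas n)).sub
      (hmeas n)).aestronglyMeasurable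
  have herr_bound n : ∀ᵐ ω ∂P, ‖err n ω‖ ≤ K + ‖μ‖ := by
    filter_upwards [hbound n] with ω hω
    calc ‖err n ω‖ = ‖X n ω - proj (X n ω)‖ := norm_sub_rev _ _
      _ ≤ ‖X n ω - μ‖ := hP.norm_sub_le _ hμ
      _ ≤ K + ‖μ‖ := (norm_sub_le _ _).trans (by linarith)
  have herr_tendsto : Tendsto (fun n => ∫ ω, err n ω ∂P) atTop (𝓝 0) := by
    refine integral_zero Ω H ▸ tendsto_integral_of_tendstoInMeasure_of_ae_norm_le herr_meas
      herr_bound (integrable_zero Ω H P) (tendstoInMeasure_of_tendsto_measure_lt fun ε hε => ?_)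
    simpa only [herr, Pi.zero_apply, sub_zero, norm_sub_rev, ← hP.infDist_eq] using hdist ε hε
  have hintegral n : ∫ ω, proj (X n ω) ∂P = ∫ ω, err n ω ∂P + μ := by
    rw [← hunbiased n, ← integral_add (Integrable.of_bound (herr_meas n) _ (herr_bound n))
      (Integrable.of_bound (hmeas n).aestronglyMeasurable K (hbound n))]
    simp only [herr, sub_add_cancel]
  simpa only [hintegral, zero_add] using herr_tendsto.add_const μ

/-- let `D` be a nonempty closed convex subset of a finite-dimensional real inner
product space `H` with metric projection `proj` (the nearest-point map onto `D`), and `Xₙ`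
bounded random vectors with `E[Xₙ] = μ ∈ D` and `dist(Xₙ, D) → 0` in probability. Then the
constrained estimator is asymptotically unbiased: `E[proj(Xₙ)] → μ`. -/
theorem constrained_estimator_asymptotically_unbiased
    {H : Type*} [NormedAddCommGroup H] [InnerProductSpace ℝ H] [FiniteDimensional ℝ H]
    [MeasurableSpace H] [BorelSpace H]
    (D : Set H) (hDne : D.Nonempty) (hDclosed : IsClosed D) (hDconvex : Convex ℝ D)
    (proj : H → H)
    (hproj : ∀ x : H, proj x ∈ D ∧ ∀ y ∈ D, ‖x - proj x‖ ≤ ‖x - y‖)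
    {Ω : Type*} [MeasurableSpace Ω] (P : Measure Ω) [IsProbabilityMeasure P]
    (X : ℕ → Ω → H) (hmeas : ∀ n, Measurable (X n))
    (K : ℝ) (hK : 0 < K) (hbound : ∀ n, ∀ᵐ ω ∂P, ‖X n ω‖ ≤ K)
    (μ : H) (hμ : μ ∈ D) (hunbiased : ∀ n, ∫ ω, X n ω ∂P = μ)
    (hdist : ∀ ε > 0,
      Tendsto (fun n => P {ω | ε < Metric.infDist (X n ω) D}) atTop (nhds 0)) :
    Tendsto (fun n => ∫ ω, proj (X n ω) ∂P) atTop (nhds μ) :=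
  constrained_estimator_asymptotically_unbiased_general D hDconvex proj hproj P X hmeas K hbound μ
    hμ hunbiased hdist
end

section
/- Let A be a k×k Hermitian matrix with trace 1 and let U be a unitary matrix such that U A U* = Diag(x₁, …, x_k) is diagonal. Let y = (y₁, …, y_k) be the unique point of the probability simplex Δ_k = { y ∈ ℝᵏ : yᵢ ≥ 0, Σᵢ yᵢ = 1 } minimizing Σᵢ (xᵢ − yᵢ)². Then U* Diag(y₁, …, y_k) U is the unique density matrix minimizing the Hilbert–Schmidt distance Tr((A − ω)²) over all k×k density matrices ω. -/
open Matrix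
open scoped ComplexOrder

/-!
Conjugation by `U` preserves traces, positive semidefiniteness and the Hilbert–Schmidt
distance, so it suffices to treat `A = diag x`. For a density matrix `B`, `‖diag x - B‖²` is
`Σᵢ (xᵢ - Bᵢᵢ)²` plus the squared moduli of the off-diagonal entries of `B`, and the diagonal
of `B` lies in the simplex, so the distance is at least `Σᵢ (xᵢ - yᵢ)²`. Equality forces `B`
to be diagonal and, by strict convexity of `z ↦ Σᵢ (xᵢ - zᵢ)²`, its diagonal to be `y`.
-/

theorem strictConvexOn_sum_sq_sub {ι : Type*} [Fintype ι] (x : ι → ℝ) :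
    StrictConvexOn ℝ Set.univ fun z : ι → ℝ => ∑ i, (x i - z i) ^ 2 := by
  refine ⟨convex_univ, fun z _ w _ hzw a b ha hb hab => ?_⟩
  obtain ⟨i, hi⟩ := Function.ne_iff.1 hzw
  have hgap : 0 < ∑ i, (z i - w i) ^ 2 :=
    Finset.sum_pos' (fun j _ => sq_nonneg _)
      ⟨i, Finset.mem_univ i, by have := sub_ne_zero.2 hi; positivity⟩
  have hsplit : a • ∑ i, (x i - z i) ^ 2 + b • ∑ i, (x i - w i) ^ 2
      = ∑ i, (x i - (a • z + b • w) i) ^ 2 + a * b * ∑ i, (z i - w i) ^ 2 := by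
    simp only [smul_eq_mul, Finset.mul_sum, ← Finset.sum_add_distrib, Pi.add_apply,
      Pi.smul_apply]
    refine Finset.sum_congr rfl fun j _ => ?_
    obtain rfl : b = 1 - a := by linarith
    ring
  rw [hsplit]
  have := mul_pos (mul_pos ha hb) hgap
  linarith

namespace Matrix
variable {n : Type*}

theorem normSq_diagonal_sub_apply_self [DecidableEq n] {B : Matrix n n ℂ} (hB : B.IsHermitian)
    (x : n → ℝ) (i : n) :
    Complex.normSq ((diagonal (fun i => (x i : ℂ)) - B) i i) = (x i - (B i i).re) ^ 2 := by
  have hBii : ((B i i).re : ℂ) = B i i := congrFun hB.coe_re_diag i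
  rw [sub_apply, diagonal_apply_eq, ← hBii, ← Complex.ofReal_sub, Complex.normSq_ofReal,
    Complex.ofReal_re, sq]

theorem IsHermitian.diagonal_ofReal_sub [DecidableEq n] {B : Matrix n n ℂ} (hB : B.IsHermitian)
    (x : n → ℝ) :
    (diagonal (fun i => (x i : ℂ)) - B).IsHermitian :=
  (isHermitian_diagonal_of_self_adjoint _ (funext fun i => Complex.conj_ofReal (x i))).sub hB

variable [Fintype n]

theorem IsHermitian.re_trace_mul_self {M : Matrix n n ℂ} (hM : M.IsHermitian) :
    (M * M).trace.re = ∑ i, ∑ j, Complex.normSq (M i j) := by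
  simp only [trace, diag_apply, mul_apply, Complex.re_sum]
  refine Finset.sum_congr rfl fun i _ => Finset.sum_congr rfl fun j _ => ?_
  rw [← hM.apply j i, Complex.star_def, Complex.mul_conj, Complex.ofReal_re]

theorem sum_normSq_diag_le (M : Matrix n n ℂ) :
    ∑ i, Complex.normSq (M i i) ≤ ∑ i, ∑ j, Complex.normSq (M i j) :=
  Finset.sum_le_sum fun i _ =>
    Finset.single_le_sum (fun j _ => Complex.normSq_nonneg (M i j)) (Finset.mem_univ i)

theorem isDiag_of_sum_normSq_eq_sum_normSq_diag {M : Matrix n n ℂ}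
    (h : ∑ i, ∑ j, Complex.normSq (M i j) = ∑ i, Complex.normSq (M i i)) : M.IsDiag := by
  intro i j hij
  by_contra hM
  have hrow : Complex.normSq (M i i) < ∑ k, Complex.normSq (M i k) :=
    Finset.single_lt_sum hij.symm (Finset.mem_univ _) (Finset.mem_univ _)
      (Complex.normSq_pos.2 hM) fun k _ _ => Complex.normSq_nonneg _
  refine (Finset.sum_lt_sum (fun i _ => Finset.single_le_sum
    (fun j _ => Complex.normSq_nonneg (M i j)) (Finset.mem_univ i))
      ⟨i, Finset.mem_univ i, hrow⟩).ne h.symm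

def IsDensityMatrix (ω : Matrix n n ℂ) : Prop :=
  ω.PosSemidef ∧ ω.trace = 1

theorem IsDensityMatrix.re_diag_mem_stdSimplex {ω : Matrix n n ℂ} (hω : IsDensityMatrix ω) :
    (fun i => (ω i i).re) ∈ stdSimplex ℝ n := by
  refine ⟨fun i => Complex.nonneg_iff.1 hω.1.diag_nonneg |>.1, ?_⟩
  simpa only [trace, diag_apply, Complex.re_sum, Complex.one_re] using congrArg Complex.re hω.2

variable [DecidableEq n]

theorem trace_conjStarAlgAut {R : Type*} [CommRing R] [StarRing R]
    (u : unitary (Matrix n n R)) (X : Matrix n n R) :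
    (Unitary.conjStarAlgAut R _ u X).trace = X.trace := by
  rw [Unitary.conjStarAlgAut_apply, trace_mul_cycle, Unitary.coe_star_mul_self, one_mul]

theorem isDensityMatrix_conjStarAlgAut_iff (u : unitary (Matrix n n ℂ)) {ω : Matrix n n ℂ} :
    IsDensityMatrix (Unitary.conjStarAlgAut ℂ _ u ω) ↔ IsDensityMatrix ω := by
  rw [IsDensityMatrix, IsDensityMatrix, trace_conjStarAlgAut, Unitary.conjStarAlgAut_apply,
    Unitary.isUnit_coe.posSemidef_star_right_conjugate_iff]

theorem isDensityMatrix_diagonal_of_mem_stdSimplex {y : n → ℝ} (hy : y ∈ stdSimplex ℝ n) :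
    IsDensityMatrix (diagonal fun i => (y i : ℂ)) := by
  refine ⟨PosSemidef.diagonal fun i => Complex.zero_le_real.2 (hy.1 i), ?_⟩
  rw [trace_diagonal, ← Complex.ofReal_sum, hy.2, Complex.ofReal_one]

theorem re_trace_sq_diagonal_sub_diagonal (x y : n → ℝ) :
    ((diagonal (fun i => (x i : ℂ)) - diagonal fun i => (y i : ℂ)) *
      (diagonal (fun i => (x i : ℂ)) - diagonal fun i => (y i : ℂ))).trace.re =
      ∑ i, (x i - y i) ^ 2 := by
  simp only [diagonal_sub, diagonal_mul_diagonal, trace_diagonal, Complex.re_sum]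
  refine Finset.sum_congr rfl fun i _ => ?_
  rw [← Complex.ofReal_sub, ← Complex.ofReal_mul, Complex.ofReal_re, sq]

theorem IsHermitian.sum_sq_sub_re_diag_le {B : Matrix n n ℂ} (hB : B.IsHermitian)
    (x : n → ℝ) :
    ∑ i, (x i - (B i i).re) ^ 2 ≤
      ((diagonal (fun i => (x i : ℂ)) - B) * (diagonal (fun i => (x i : ℂ)) - B)).trace.re := by
  simp only [(hB.diagonal_ofReal_sub x).re_trace_mul_self, ← normSq_diagonal_sub_apply_self hB]
  exact sum_normSq_diag_le _

theorem IsHermitian.isDiag_of_re_trace_sq_eq_sum_sq_sub_re_diag {B : Matrix n n ℂ}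
    (hB : B.IsHermitian) {x : n → ℝ}
    (h : ((diagonal (fun i => (x i : ℂ)) - B) * (diagonal (fun i => (x i : ℂ)) - B)).trace.re =
      ∑ i, (x i - (B i i).re) ^ 2) : B.IsDiag := by
  simp only [(hB.diagonal_ofReal_sub x).re_trace_mul_self,
    ← normSq_diagonal_sub_apply_self hB] at h
  simpa only [sub_sub_cancel] using
    (isDiag_diagonal fun i => (x i : ℂ)).sub (isDiag_of_sum_normSq_eq_sum_normSq_diag h)

section DiagonalFrame
variable {x y : n → ℝ} (hmin : IsMinOn (fun z => ∑ i, (x i - z i) ^ 2) (stdSimplex ℝ n) y)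
include hmin

theorem IsDensityMatrix.sum_sq_sub_le_re_trace_sq {B : Matrix n n ℂ} (hB : IsDensityMatrix B) :
    ∑ i, (x i - y i) ^ 2 ≤
      ((diagonal (fun i => (x i : ℂ)) - B) * (diagonal (fun i => (x i : ℂ)) - B)).trace.re :=
  (hmin hB.re_diag_mem_stdSimplex).trans (hB.1.1.sum_sq_sub_re_diag_le x)

theorem IsDensityMatrix.eq_diagonal_of_re_trace_sq_eq (hy : y ∈ stdSimplex ℝ n)
    {B : Matrix n n ℂ} (hB : IsDensityMatrix B)
    (h : ((diagonal (fun i => (x i : ℂ)) - B) * (diagonal (fun i => (x i : ℂ)) - B)).trace.re =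
      ∑ i, (x i - y i) ^ 2) :
    B = diagonal fun i => (y i : ℂ) := by
  have hb := hB.re_diag_mem_stdSimplex
  have hdiag_le := hB.1.1.sum_sq_sub_re_diag_le x
  have hvalue_le : ∑ i, (x i - y i) ^ 2 ≤ ∑ i, (x i - (B i i).re) ^ 2 := hmin hb
  have hb_min : IsMinOn (fun z => ∑ i, (x i - z i) ^ 2) (stdSimplex ℝ n) fun i => (B i i).re :=
    fun z hz => (le_antisymm (hdiag_le.trans h.le) hvalue_le).trans_le (hmin hz)
  have hby : (fun i => (B i i).re) = y :=
    ((strictConvexOn_sum_sq_sub x).subset (Set.subset_univ _)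
      (convex_stdSimplex ℝ n)).eq_of_isMinOn hb_min hmin hb hy
  have hB_diag : B.IsDiag :=
    hB.1.1.isDiag_of_re_trace_sq_eq_sum_sq_sub_re_diag (by linarith)
  rw [← hB_diag.diagonal_diag, ← hby, ← hB.1.1.coe_re_diag]
  rfl

end DiagonalFrame

end Matrix

theorem constrained_estimate_via_diagonalization_general {k : ℕ}
    (A : Matrix (Fin k) (Fin k) ℂ)
    (U : Matrix (Fin k) (Fin k) ℂ) (hU₁ : U * Uᴴ = 1) (hU₂ : Uᴴ * U = 1)
    (x : Fin k → ℝ) (hdiag : U * A * Uᴴ = Matrix.diagonal (fun i => (x i : ℂ)))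
    (y : Fin k → ℝ) (hy₀ : ∀ i, 0 ≤ y i) (hy₁ : ∑ i, y i = 1)
    (hymin : ∀ z : Fin k → ℝ, (∀ i, 0 ≤ z i) → ∑ i, z i = 1 →
      ∑ i, (x i - y i) ^ 2 ≤ ∑ i, (x i - z i) ^ 2)
    (ω₀ : Matrix (Fin k) (Fin k) ℂ)
    (hω₀ : ω₀ = Uᴴ * Matrix.diagonal (fun i => (y i : ℂ)) * U) :
    (ω₀.PosSemidef ∧ ω₀.trace = 1) ∧
    ∀ ω : Matrix (Fin k) (Fin k) ℂ, ω.PosSemidef → ω.trace = 1 →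
      (((A - ω₀) * (A - ω₀)).trace.re ≤ ((A - ω) * (A - ω)).trace.re) ∧
      (((A - ω) * (A - ω)).trace.re = ((A - ω₀) * (A - ω₀)).trace.re → ω = ω₀) := by
  let Φ := Unitary.conjStarAlgAut ℂ _ (⟨U, Unitary.mem_iff.2 ⟨hU₂, hU₁⟩⟩ : unitary _)
  have hy : y ∈ stdSimplex ℝ (Fin k) := ⟨hy₀, hy₁⟩
  have hmin : IsMinOn (fun z => ∑ i, (x i - z i) ^ 2) (stdSimplex ℝ (Fin k)) y :=
    fun z hz => hymin z hz.1 hz.2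
  -- `Uᴴ * D * U` is `Φ.symm D` by unfolding
  have hΦω₀ : Φ ω₀ = diagonal fun i => (y i : ℂ) := hω₀ ▸ Φ.apply_symm_apply _
  have hΦA : Φ A = diagonal fun i => (x i : ℂ) := hdiag
  have hdist (ω : Matrix (Fin k) (Fin k) ℂ) : ((A - ω) * (A - ω)).trace.re =
      ((diagonal (fun i => (x i : ℂ)) - Φ ω) *
        (diagonal (fun i => (x i : ℂ)) - Φ ω)).trace.re := by
    rw [← hΦA, ← map_sub, ← map_mul, trace_conjStarAlgAut]
  have hω₀_density : IsDensityMatrix ω₀ :=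
    (isDensityMatrix_conjStarAlgAut_iff _).1
      (hΦω₀ ▸ isDensityMatrix_diagonal_of_mem_stdSimplex hy)
  refine ⟨hω₀_density, fun ω hω_psd hω_tr => ?_⟩
  have hΦω : IsDensityMatrix (Φ ω) :=
    (isDensityMatrix_conjStarAlgAut_iff _).2 ⟨hω_psd, hω_tr⟩
  rw [hdist, hdist, hΦω₀, re_trace_sq_diagonal_sub_diagonal]
  exact ⟨hΦω.sum_sq_sub_le_re_trace_sq hmin,
    fun h => Φ.injective ((hΦω.eq_diagonal_of_re_trace_sq_eq hmin hy h).trans hΦω₀.symm)⟩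

/-- if `U A U* = Diag(x)` diagonalizes a Hermitian trace-one matrix `A` and
`y` minimizes `Σᵢ (xᵢ − yᵢ)²` over the probability simplex, then `U* Diag(y) U` is the unique
density matrix minimizing the Hilbert–Schmidt distance `Tr((A − ω)²)` over density matrices. -/
theorem constrained_estimate_via_diagonalization {k : ℕ}
    (A : Matrix (Fin k) (Fin k) ℂ) (hA : A.IsHermitian) (htrA : A.trace = 1)
    (U : Matrix (Fin k) (Fin k) ℂ) (hU₁ : U * Uᴴ = 1) (hU₂ : Uᴴ * U = 1)
    (x : Fin k → ℝ) (hdiag : U * A * Uᴴ = Matrix.diagonal (fun i => (x i : ℂ)))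
    (y : Fin k → ℝ) (hy₀ : ∀ i, 0 ≤ y i) (hy₁ : ∑ i, y i = 1)
    (hymin : ∀ z : Fin k → ℝ, (∀ i, 0 ≤ z i) → ∑ i, z i = 1 →
      ∑ i, (x i - y i) ^ 2 ≤ ∑ i, (x i - z i) ^ 2)
    (ω₀ : Matrix (Fin k) (Fin k) ℂ)
    (hω₀ : ω₀ = Uᴴ * Matrix.diagonal (fun i => (y i : ℂ)) * U) :
    (ω₀.PosSemidef ∧ ω₀.trace = 1) ∧
    ∀ ω : Matrix (Fin k) (Fin k) ℂ, ω.PosSemidef → ω.trace = 1 →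
      (((A - ω₀) * (A - ω₀)).trace.re ≤ ((A - ω) * (A - ω)).trace.re) ∧
      (((A - ω) * (A - ω)).trace.re = ((A - ω₀) * (A - ω₀)).trace.re → ω = ω₀) :=
  constrained_estimate_via_diagonalization_general A U hU₁ hU₂ x hdiag y hy₀ hy₁ hymin ω₀ hω₀
end

section
/- Let x = (x₁, …, x_n) ∈ ℝⁿ satisfy Σᵢ xᵢ = 1, with xᵢ < 0 for 1 ≤ i ≤ k and xᵢ ≥ 0 for k+1 ≤ i ≤ n (where 1 ≤ k < n). Set c = (1/(n−k))·Σ_{i=1}^{k} xᵢ and suppose xᵢ + c ≥ 0 for all i = k+1, …, n. Then the vector y defined by yᵢ = 0 for i ≤ k and yᵢ = xᵢ + c for i > k is the unique minimizer of Σᵢ (xᵢ − yᵢ)² over the probability simplex { y ∈ ℝⁿ : yᵢ ≥ 0, Σᵢ yᵢ = 1 }. -/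
open Finset

/-!
The candidate `y` satisfies the optimality (KKT) conditions of the projection onto the simplex
with multiplier `-c`: `x i - y i ≤ -c` everywhere, with equality wherever `y i ≠ 0`; on the
first `k` coordinates this is `x i + c ≤ 0`, true because `x i < 0` and `c ≤ 0`. These conditions
give `∑ (z - y) (x - y) ≤ 0` for every `z` in the simplex, so `x`, `y`, `z` make an obtuse angle
at `y` and `‖x - z‖² ≥ ‖x - y‖² + ‖z - y‖²`, which yields both minimality and uniqueness.
-/

section Projection

variable {ι : Type*} (s : Finset ι) (x y z : ι → ℝ)

theorem sum_sq_sub_add_sum_sq_sub_le (h : ∑ i ∈ s, (z i - y i) * (x i - y i) ≤ 0) :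
    ∑ i ∈ s, (x i - y i) ^ 2 + ∑ i ∈ s, (z i - y i) ^ 2 ≤ ∑ i ∈ s, (x i - z i) ^ 2 := by
  have hexpand : ∑ i ∈ s, (x i - z i) ^ 2 = ∑ i ∈ s, (x i - y i) ^ 2 + ∑ i ∈ s, (z i - y i) ^ 2
      - 2 * ∑ i ∈ s, (z i - y i) * (x i - y i) := by
    rw [mul_sum, ← sum_add_distrib, ← sum_sub_distrib]
    exact sum_congr rfl fun i _ => by ring
  linarith

/-- `t` is the Lagrange multiplier of the constraint `∑ z = ∑ y`. -/
theorem sum_sub_mul_sub_nonpos_of_kkt (t : ℝ) (hle : ∀ i ∈ s, x i - y i ≤ t)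
    (hslack : ∀ i ∈ s, y i = 0 ∨ x i - y i = t) (hz : ∀ i ∈ s, 0 ≤ z i)
    (hsum : ∑ i ∈ s, z i = ∑ i ∈ s, y i) :
    ∑ i ∈ s, (z i - y i) * (x i - y i) ≤ 0 := by
  have hy : ∑ i ∈ s, y i * (x i - y i - t) = 0 := sum_eq_zero fun i hi => by
    rcases hslack i hi with h | h <;> simp [h]
  have hz' : ∑ i ∈ s, z i * (x i - y i - t) ≤ 0 := sum_nonpos fun i hi =>
    mul_nonpos_of_nonneg_of_nonpos (hz i hi) (by linarith [hle i hi])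
  calc ∑ i ∈ s, (z i - y i) * (x i - y i)
      = ∑ i ∈ s, z i * (x i - y i - t) - ∑ i ∈ s, y i * (x i - y i - t)
          + t * (∑ i ∈ s, z i - ∑ i ∈ s, y i) := by
        rw [mul_sub, mul_sum, mul_sum, ← sum_sub_distrib, ← sum_sub_distrib, ← sum_add_distrib]
        exact sum_congr rfl fun i _ => by ring
    _ ≤ 0 := by rw [hy, hsum]; linarith

variable [Fintype ι]

theorem sum_sq_sub_le_and_eq_of_kkt (t : ℝ) (hle : ∀ i, x i - y i ≤ t)
    (hslack : ∀ i, y i = 0 ∨ x i - y i = t) (hz : ∀ i, 0 ≤ z i)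
    (hsum : ∑ i, z i = ∑ i, y i) :
    ∑ i, (x i - y i) ^ 2 ≤ ∑ i, (x i - z i) ^ 2 ∧
      (∑ i, (x i - z i) ^ 2 = ∑ i, (x i - y i) ^ 2 → z = y) := by
  have hpyth := sum_sq_sub_add_sum_sq_sub_le univ x y z <|
    sum_sub_mul_sub_nonpos_of_kkt univ x y z t (fun i _ => hle i) (fun i _ => hslack i)
      (fun i _ => hz i) hsum
  have hdist : 0 ≤ ∑ i, (z i - y i) ^ 2 := sum_nonneg fun i _ => sq_nonneg _
  refine ⟨by linarith, fun heq => funext fun i => ?_⟩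
  have hzero := (sum_eq_zero_iff_of_nonneg fun i _ => sq_nonneg (z i - y i)).mp (by linarith) i
    (mem_univ i)
  exact sub_eq_zero.mp (pow_eq_zero_iff two_ne_zero |>.mp hzero)

theorem sum_ite_zero_add_const (p : ι → Prop) [DecidablePred p] (c : ℝ) :
    ∑ i, (if p i then 0 else x i + c) =
      ∑ i, x i - ∑ i ∈ univ.filter p, x i + (Fintype.card ι - #(univ.filter p)) * c := by
  have hfilter := sum_filter (s := univ) p (fun i => x i + c)
  rw [sum_add_distrib, sum_const, nsmul_eq_mul] at hfilter
  calc ∑ i, (if p i then 0 else x i + c)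
      = ∑ i, (x i + c) - ∑ i, (if p i then x i + c else 0) := by
        rw [← sum_sub_distrib]
        exact sum_congr rfl fun i _ => by split_ifs <;> ring
    _ = _ := by
        rw [← hfilter, sum_add_distrib, sum_const, card_univ, nsmul_eq_mul]
        ring

end Projection

theorem simplex_projection_step_general (n k : ℕ) (hkn : k < n)
    (x : Fin n → ℝ) (hsum : ∑ i, x i = 1)
    (hneg : ∀ i : Fin n, (i : ℕ) < k → x i < 0)
    (c : ℝ)
    (hc : c = (∑ i ∈ univ.filter (fun i : Fin n => (i : ℕ) < k), x i) / ((n : ℝ) - (k : ℝ)))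
    (hxc : ∀ i : Fin n, k ≤ (i : ℕ) → 0 ≤ x i + c)
    (y : Fin n → ℝ) (hy : y = fun i : Fin n => if (i : ℕ) < k then 0 else x i + c) :
    (∀ i, 0 ≤ y i) ∧ (∑ i, y i = 1) ∧
      ∀ z : Fin n → ℝ, (∀ i, 0 ≤ z i) → (∑ i, z i = 1) →
        (∑ i, (x i - y i) ^ 2 ≤ ∑ i, (x i - z i) ^ 2) ∧
        (∑ i, (x i - z i) ^ 2 = ∑ i, (x i - y i) ^ 2 → z = y) := by
  have hnk : (0 : ℝ) < n - k := sub_pos.mpr (by exact_mod_cast hkn)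
  have hc_nonpos : c ≤ 0 := hc ▸ div_nonpos_of_nonpos_of_nonneg
    (sum_nonpos fun i hi => (hneg i (mem_filter.mp hi).2).le) hnk.le
  have hy_sum : ∑ i, y i = 1 := by
    rw [hy, sum_ite_zero_add_const, hsum, Fintype.card_fin, Fin.card_filter_val_lt,
      min_eq_right hkn.le, hc]
    field_simp
    ring
  have hy_apply (i : Fin n) : y i = if (i : ℕ) < k then 0 else x i + c := by rw [hy]
  refine ⟨fun i => ?_, hy_sum, fun z hz hz_sum => ?_⟩
  · rw [hy_apply]
    split_ifs with h
    exacts [le_rfl, hxc i (not_lt.mp h)]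
  refine sum_sq_sub_le_and_eq_of_kkt x y z (-c) (fun i => ?_) (fun i => ?_) hz
    (hz_sum.trans hy_sum.symm)
  all_goals rw [hy_apply]; split_ifs with h
  · linarith [hneg i h]
  · linarith
  · exact Or.inl rfl
  · exact Or.inr (by ring)

/-- projection of a trace-normalized vector with negative entries in the first
`k` coordinates onto the probability simplex: if `c = (Σ_{i<k} xᵢ)/(n−k)` and all
`xᵢ + c ≥ 0` for `i ≥ k`, then `y` (zero on the first `k` coordinates, `xᵢ + c` on the rest)
is the unique minimizer of `Σᵢ (xᵢ − yᵢ)²` over the probability simplex. -/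
theorem simplex_projection_step (n k : ℕ) (hk : 1 ≤ k) (hkn : k < n)
    (x : Fin n → ℝ) (hsum : ∑ i, x i = 1)
    (hneg : ∀ i : Fin n, (i : ℕ) < k → x i < 0)
    (hnonneg : ∀ i : Fin n, k ≤ (i : ℕ) → 0 ≤ x i)
    (c : ℝ)
    (hc : c = (∑ i ∈ univ.filter (fun i : Fin n => (i : ℕ) < k), x i) / ((n : ℝ) - (k : ℝ)))
    (hxc : ∀ i : Fin n, k ≤ (i : ℕ) → 0 ≤ x i + c)
    (y : Fin n → ℝ) (hy : y = fun i : Fin n => if (i : ℕ) < k then 0 else x i + c) :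
    (∀ i, 0 ≤ y i) ∧ (∑ i, y i = 1) ∧
      ∀ z : Fin n → ℝ, (∀ i, 0 ≤ z i) → (∑ i, z i = 1) →
        (∑ i, (x i - y i) ^ 2 ≤ ∑ i, (x i - z i) ^ 2) ∧
        (∑ i, (x i - z i) ^ 2 = ∑ i, (x i - y i) ^ 2 → z = y) :=
  simplex_projection_step_general n k hkn x hsum hneg c hc hxc y hy
end

section
/- Let u(1), u(2), u(3) be linearly independent unit vectors in ℝ³, let T be the 3×3 real matrix whose i-th row is u(i), and define for θ ∈ ℝ³ the mean quadratic error matrix V(θ) = T⁻¹ · Diag(1 − (u(1)·θ)², 1 − (u(2)·θ)², 1 − (u(3)·θ)²) · (T⁻¹)ᵗ. Let λ̄ be the normalized Lebesgue measure on the closed unit ball B ⊆ ℝ³. Then det( ∫_B V(θ) dλ̄(θ) ) = (4/5)³ / (det T)² ≥ (4/5)³, and equality holds if and only if u(1), u(2), u(3) are pairwise orthogonal. In other words, the determinant of the average mean quadratic error matrix is smallest exactly when the measured observables u(i)·σ are complementary. -/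
/-!
By rotation invariance of the ball, every unit vector `u` has the same second moment
`∫ ⟪u, θ⟫²`; summing over an orthonormal basis gives `1/n` of `∫ ‖θ‖²`, so averaging over the
ball of `ℝⁿ` yields `avg (1 - ⟪u, θ⟫²) = (n + 1)/(n + 2)`, i.e. `4/5` in dimension three. Hence the
averaged error matrix is `(4/5) T⁻¹ T⁻ᵀ`, with determinant `(4/5)³ / det (T Tᵀ)`. Here `T Tᵀ` is
the Gram matrix of the `u i`; with `a, b, c` the off-diagonal inner products its determinant is
`1 - (a² + b² + c² - 2abc)`, and `a² + b² + c² - 2abc = (a - bc)² + b² + (1 - b²)c²` is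
nonnegative because `b² ≤ 1`, vanishing exactly when `a = b = c = 0`.
-/

open MeasureTheory Matrix Metric Module

section SecondMoment

variable {E : Type*} [NormedAddCommGroup E] [InnerProductSpace ℝ E] [FiniteDimensional ℝ E]
  [MeasurableSpace E] [BorelSpace E]

theorem setIntegral_closedBall_comp_inner_eq_of_norm_eq (f : ℝ → ℝ) (r : ℝ) {u v : E}
    (h : ‖u‖ = ‖v‖) :
    ∫ θ in closedBall (0 : E) r, f (inner ℝ u θ)
      = ∫ θ in closedBall (0 : E) r, f (inner ℝ v θ) := by
  set R := (ℝ ∙ (u - v))ᗮ.reflection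
  have hRu : R u = v := Submodule.reflection_sub h
  rw [← R.measurePreserving.setIntegral_preimage_emb R.toHomeomorph.measurableEmbedding
    (fun θ => f (inner ℝ v θ)), ← hRu]
  simp_rw [R.inner_map_map, R.preimage_closedBall, map_zero]

theorem setIntegral_closedBall_norm_sq [Nontrivial E] :
    ∫ θ in closedBall (0 : E) 1, ‖θ‖ ^ 2
      = finrank ℝ E / (finrank ℝ E + 2) * volume.real (closedBall (0 : E) 1) := by
  have hindicator : (closedBall (0 : E) 1).indicator (fun θ => ‖θ‖ ^ 2)
      = fun θ => (Set.Iic (1 : ℝ)).indicator (· ^ 2) ‖θ‖ := by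
    ext θ
    simp [Set.indicator]
  have hdim : 0 < finrank ℝ E := finrank_pos
  have hradial : ∫ y in Set.Ioi (0 : ℝ),
      y ^ (finrank ℝ E - 1) • (Set.Iic (1 : ℝ)).indicator (· ^ 2) y = 1 / (finrank ℝ E + 2) := by
    have hpow : ∀ y ∈ Set.Ioi (0 : ℝ),
        y ^ (finrank ℝ E - 1) • (Set.Iic (1 : ℝ)).indicator (· ^ 2) y
          = (Set.Iic (1 : ℝ)).indicator (· ^ (finrank ℝ E + 1)) y := by
      intro y _
      by_cases hy : y ≤ 1
      · simp [Set.indicator, hy, ← pow_add]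
        congr 1
        omega
      · simp [hy]
    rw [setIntegral_congr_fun measurableSet_Ioi hpow, setIntegral_indicator measurableSet_Iic,
      Set.Ioi_inter_Iic, ← intervalIntegral.integral_of_le zero_le_one, integral_pow]
    push_cast
    ring_nf
  rw [← integral_indicator measurableSet_closedBall, hindicator, integral_fun_norm_addHaar,
    hradial, measureReal_def, measureReal_def, Measure.addHaar_closedBall_eq_addHaar_ball,
    nsmul_eq_mul, smul_eq_mul]
  field_simp

theorem integrableOn_closedBall_inner_sq (u : E) (r : ℝ) :
    IntegrableOn (fun θ : E => inner ℝ u θ ^ 2) (closedBall 0 r) :=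
  ((continuous_const.inner continuous_id).pow 2).continuousOn.integrableOn_compact
    (isCompact_closedBall _ _)

theorem setIntegral_closedBall_inner_sq {u : E} (hu : ‖u‖ = 1) :
    ∫ θ in closedBall (0 : E) 1, inner ℝ u θ ^ 2
      = volume.real (closedBall (0 : E) 1) / (finrank ℝ E + 2) := by
  have : Nontrivial E := nontrivial_of_ne u 0 (norm_ne_zero_iff.mp (by simp [hu]))
  have hdim : (0 : ℝ) < finrank ℝ E := Nat.cast_pos.mpr finrank_pos
  set b := stdOrthonormalBasis ℝ E
  have hb (i) : ∫ θ in closedBall (0 : E) 1, inner ℝ (b i) θ ^ 2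
      = ∫ θ in closedBall (0 : E) 1, inner ℝ u θ ^ 2 :=
    setIntegral_closedBall_comp_inner_eq_of_norm_eq (· ^ 2) 1 (by simp [hu])
  have hsum (θ : E) : ∑ i, inner ℝ (b i) θ ^ 2 = ‖θ‖ ^ 2 := by
    simpa [Real.norm_eq_abs, sq_abs] using b.sum_sq_norm_inner_right θ
  refine mul_left_cancel₀ hdim.ne' ?_
  calc (finrank ℝ E : ℝ) * ∫ θ in closedBall (0 : E) 1, inner ℝ u θ ^ 2
      = ∑ i, ∫ θ in closedBall (0 : E) 1, inner ℝ (b i) θ ^ 2 := by simp [hb]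
    _ = ∫ θ in closedBall (0 : E) 1, ‖θ‖ ^ 2 := by
      rw [← integral_finsetSum _ fun i _ => integrableOn_closedBall_inner_sq _ _]
      simp_rw [hsum]
    _ = _ := by
      rw [setIntegral_closedBall_norm_sq]
      ring

theorem setAverage_closedBall_one_sub_inner_sq {u : E} (hu : ‖u‖ = 1) :
    ⨍ θ in closedBall (0 : E) 1, 1 - inner ℝ u θ ^ 2
      = (finrank ℝ E + 1 : ℝ) / (finrank ℝ E + 2) := by
  have hvol : 0 < volume.real (closedBall (0 : E) 1) :=
    ENNReal.toReal_pos (measure_closedBall_pos _ _ one_pos).ne' measure_closedBall_lt_top.ne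
  rw [setAverage_eq, integral_sub (integrableOn_const (C := (1 : ℝ)) measure_closedBall_lt_top.ne)
      (integrableOn_closedBall_inner_sq u 1), setIntegral_const, setIntegral_closedBall_inner_sq hu,
    smul_eq_mul, smul_eq_mul, mul_one]
  field_simp
  ring

end SecondMoment

theorem setIntegral_closedBall_one_sub_inner_sq_fin_three {u : EuclideanSpace ℝ (Fin 3)}
    (hu : ‖u‖ = 1) :
    ∫ θ in closedBall 0 1, 1 - inner ℝ u θ ^ 2 ∂((ENNReal.ofReal (4 * Real.pi / 3))⁻¹ • volume)
      = 4 / 5 := by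
  have hvol : volume (closedBall (0 : EuclideanSpace ℝ (Fin 3)) 1)
      = ENNReal.ofReal (4 * Real.pi / 3) := by
    simp [mul_comm]
  rw [← hvol, Measure.restrict_smul, ← setAverage_eq', setAverage_closedBall_one_sub_inner_sq hu,
    finrank_euclideanSpace_fin]
  norm_num

theorem integral_mul_diagonal_mul_apply {α m ι n : Type*} [Fintype ι] [DecidableEq ι]
    [MeasurableSpace α] {μ : Measure α} (A : Matrix m ι ℝ) (B : Matrix ι n ℝ) {d : ι → α → ℝ}
    (hd : ∀ k, Integrable (d k) μ) (i : m) (j : n) :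
    ∫ x, (A * diagonal (fun k => d k x) * B) i j ∂μ
      = (A * diagonal (fun k => ∫ x, d k x ∂μ) * B) i j := by
  have entry (D : ι → ℝ) : (A * diagonal D * B) i j = ∑ k, A i k * D k * B k j := by
    simp [mul_apply, diagonal_apply]
  simp only [entry]
  rw [integral_finsetSum _ fun k _ => ((hd k).const_mul _).mul_const _]
  simp only [integral_mul_const, integral_const_mul]

theorem det_inv_mul_diagonal_mul_inv_transpose {n K : Type*} [Fintype n] [DecidableEq n]
    [Field K] (T : Matrix n n K) (d : n → K) :
    (T⁻¹ * diagonal d * T⁻¹ᵀ).det = (∏ i, d i) / T.det ^ 2 := by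
  rw [det_mul, det_mul, det_transpose, det_diagonal, det_nonsing_inv, Ring.inverse_eq_inv']
  ring

theorem det_sq_eq_det_gram {n : Type*} [Fintype n] [DecidableEq n]
    (u : n → EuclideanSpace ℝ n) :
    (of fun i j => u i j).det ^ 2 = (gram ℝ u).det := by
  rw [sq]
  nth_rw 2 [← det_transpose]
  rw [← det_mul]
  congr 1
  ext i j
  simp [gram_apply, mul_apply, PiLp.inner_apply, mul_comm]

theorem sq_add_sq_add_sq_sub_two_mul_mul_mul_eq (a b c : ℝ) :
    a ^ 2 + b ^ 2 + c ^ 2 - 2 * a * b * c = (a - b * c) ^ 2 + b ^ 2 + (1 - b ^ 2) * c ^ 2 := by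
  ring

theorem sq_add_sq_add_sq_sub_two_mul_mul_mul_nonneg (a c : ℝ) {b : ℝ} (hb : b ^ 2 ≤ 1) :
    0 ≤ a ^ 2 + b ^ 2 + c ^ 2 - 2 * a * b * c := by
  rw [sq_add_sq_add_sq_sub_two_mul_mul_mul_eq]
  exact add_nonneg (add_nonneg (sq_nonneg _) (sq_nonneg _))
    (mul_nonneg (sub_nonneg.2 hb) (sq_nonneg _))

theorem sq_add_sq_add_sq_sub_two_mul_mul_mul_eq_zero_iff {a b c : ℝ} (hb : b ^ 2 ≤ 1) :
    a ^ 2 + b ^ 2 + c ^ 2 - 2 * a * b * c = 0 ↔ a = 0 ∧ b = 0 ∧ c = 0 := by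
  refine ⟨fun h => ?_, by rintro ⟨rfl, rfl, rfl⟩; ring⟩
  rw [sq_add_sq_add_sq_sub_two_mul_mul_mul_eq] at h
  have hb0 : b = 0 := by
    nlinarith [sq_nonneg (a - b * c), mul_nonneg (sub_nonneg.2 hb) (sq_nonneg c)]
  subst hb0
  obtain ⟨ha, hc⟩ := (add_eq_zero_iff_of_nonneg (sq_nonneg a) (sq_nonneg c)).1 (by linarith)
  exact ⟨pow_eq_zero_iff two_ne_zero |>.1 ha, rfl, pow_eq_zero_iff two_ne_zero |>.1 hc⟩

section UnitGram

variable {F : Type*} [NormedAddCommGroup F] [InnerProductSpace ℝ F]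

theorem det_gram_fin_three_of_norm_eq_one {u : Fin 3 → F} (hu : ∀ i, ‖u i‖ = 1) :
    (gram ℝ u).det = 1 - (inner ℝ (u 0) (u 1) ^ 2 + inner ℝ (u 0) (u 2) ^ 2
      + inner ℝ (u 1) (u 2) ^ 2
      - 2 * inner ℝ (u 0) (u 1) * inner ℝ (u 0) (u 2) * inner ℝ (u 1) (u 2)) := by
  simp only [det_fin_three, gram_apply, real_inner_self_eq_norm_sq, hu]
  rw [real_inner_comm (u 1) (u 0), real_inner_comm (u 2) (u 0), real_inner_comm (u 2) (u 1)]
  ring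

theorem inner_sq_le_one_of_norm_eq_one {x y : F} (hx : ‖x‖ = 1) (hy : ‖y‖ = 1) :
    inner ℝ x y ^ 2 ≤ 1 := by
  simpa [sq_le_one_iff_abs_le_one, hx, hy] using abs_real_inner_le_norm x y

theorem det_gram_le_one_of_norm_eq_one {u : Fin 3 → F} (hu : ∀ i, ‖u i‖ = 1) :
    (gram ℝ u).det ≤ 1 := by
  rw [det_gram_fin_three_of_norm_eq_one hu, sub_le_self_iff]
  exact sq_add_sq_add_sq_sub_two_mul_mul_mul_nonneg _ _
    (inner_sq_le_one_of_norm_eq_one (hu 0) (hu 2))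

theorem det_gram_eq_one_iff_of_norm_eq_one {u : Fin 3 → F} (hu : ∀ i, ‖u i‖ = 1) :
    (gram ℝ u).det = 1 ↔ ∀ i j, i ≠ j → inner ℝ (u i) (u j) = 0 := by
  rw [det_gram_fin_three_of_norm_eq_one hu, sub_eq_self,
    sq_add_sq_add_sq_sub_two_mul_mul_mul_eq_zero_iff
      (inner_sq_le_one_of_norm_eq_one (hu 0) (hu 2))]
  refine ⟨?_, fun h => ⟨h 0 1 (by decide), h 0 2 (by decide), h 1 2 (by decide)⟩⟩
  rintro ⟨h01, h02, h12⟩ i j hij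
  fin_cases i <;> fin_cases j <;>
    simp_all [real_inner_comm (u 0) (u 1), real_inner_comm (u 0) (u 2),
      real_inner_comm (u 1) (u 2)]

end UnitGram

/-- for linearly independent unit vectors `u(1), u(2), u(3)` forming the rows of
`T`, the average over the Bloch ball (normalized Lebesgue measure) of the mean quadratic error
matrix `V(θ) = T⁻¹·Diag(1 − (u(i)·θ)²)·(T⁻¹)ᵗ` has determinant `(4/5)³/(det T)² ≥ (4/5)³`,
with equality exactly when the vectors are pairwise orthogonal (complementary observables). -/
theorem det_average_mqe_min_iff_complementary
    (u : Fin 3 → EuclideanSpace ℝ (Fin 3)) (hu : ∀ i, ‖u i‖ = 1)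
    (hind : LinearIndependent ℝ u)
    (T : Matrix (Fin 3) (Fin 3) ℝ) (hT : ∀ i j, T i j = u i j)
    (V : EuclideanSpace ℝ (Fin 3) → Matrix (Fin 3) (Fin 3) ℝ)
    (hV : ∀ θ, V θ =
      T⁻¹ * Matrix.diagonal (fun i => 1 - (inner ℝ (u i) θ : ℝ) ^ 2) * (T⁻¹)ᵀ)
    (W : Matrix (Fin 3) (Fin 3) ℝ)
    (hW : ∀ i j, W i j = ∫ θ in Metric.closedBall (0 : EuclideanSpace ℝ (Fin 3)) 1,
        V θ i j ∂((ENNReal.ofReal (4 * Real.pi / 3))⁻¹ • volume)) :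
    W.det = (4 / 5) ^ 3 / T.det ^ 2 ∧
    (4 / 5) ^ 3 ≤ W.det ∧
    (W.det = (4 / 5) ^ 3 ↔ ∀ i j, i ≠ j → (inner ℝ (u i) (u j) : ℝ) = 0) := by
  have hdetT : T.det ^ 2 = (gram ℝ u).det := Matrix.ext hT ▸ det_sq_eq_det_gram u
  have hpos : 0 < T.det ^ 2 := hdetT ▸ (posDef_gram_of_linearIndependent hind).det_pos
  have hWT : W = T⁻¹ * diagonal (fun _ => 4 / 5) * T⁻¹ᵀ := by
    ext i j
    have havg k := setIntegral_closedBall_one_sub_inner_sq_fin_three (hu k)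
    simp only [hW, hV]
    rw [integral_mul_diagonal_mul_apply _ _
      fun k => Integrable.of_integral_ne_zero (by rw [havg k]; norm_num)]
    simp only [havg]
  have hdetW : W.det = (4 / 5) ^ 3 / T.det ^ 2 := by
    rw [hWT, det_inv_mul_diagonal_mul_inv_transpose, Finset.prod_const, Finset.card_fin]
  refine ⟨hdetW, ?_, ?_⟩
  · rw [hdetW, le_div_iff₀ hpos]
    exact mul_le_of_le_one_right (by norm_num) (hdetT ▸ det_gram_le_one_of_norm_eq_one hu)
  · rw [hdetW, div_eq_iff hpos.ne', eq_comm, mul_eq_left₀ (by norm_num), hdetT,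
      det_gram_eq_one_iff_of_norm_eq_one hu]
end

section
/- For every θ = (θ₁, θ₂, θ₃) ∈ ℝ³, the 3×3 real symmetric matrix with diagonal entries 2θ₁², 2θ₂², 2θ₃² and off-diagonal entries −θ₁θ₂, −θ₁θ₃, −θ₂θ₃ (in positions (1,2), (1,3), (2,3) and symmetrically) is positive semidefinite. Equivalently, 3·Diag(1−θ₁², 1−θ₂², 1−θ₃²) ≼ 3I − θθᵗ in the Loewner order; hence the mean quadratic error matrix of the complementary measurement of σ₁, σ₂, σ₃ is smaller than or equal to that of the standard qubit tomography, so the complementary measurement is more efficient. -/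
/-! Both matrices equal `3 · Diag(θᵢ²) − θθᵗ`, whose quadratic form at `x` is
`3 ∑ (θᵢxᵢ)² − (∑ θᵢxᵢ)²`, nonnegative by Cauchy–Schwarz. -/

open Matrix

theorem Matrix.posSemidef_card_smul_diagonal_sq_sub_vecMulVec_self {n : Type*} [Fintype n]
    [DecidableEq n] (θ : n → ℝ) :
    ((Fintype.card n : ℝ) • diagonal (fun i => θ i ^ 2) - vecMulVec θ θ).PosSemidef := by
  have hHerm : ((Fintype.card n : ℝ) • diagonal (fun i => θ i ^ 2) - vecMulVec θ θ).IsHermitian :=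
    ((isHermitian_diagonal _).smul (.all _)).sub (posSemidef_vecMulVec_self_star θ).isHermitian
  refine .of_dotProduct_mulVec_nonneg hHerm fun x => ?_
  have hform : star x ⬝ᵥ (((Fintype.card n : ℝ) • diagonal (fun i => θ i ^ 2)
      - vecMulVec θ θ) *ᵥ x) = Fintype.card n * ∑ i, (θ i * x i) ^ 2 - (∑ i, θ i * x i) ^ 2 := by
    simp only [sub_mulVec, smul_mulVec, vecMulVec_mulVec, dotProduct_sub, dotProduct_smul,
      star_trivial, op_smul_eq_mul, smul_eq_mul, dotProduct_comm x θ, ← sq]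
    simp only [dotProduct, mulVec_diagonal]
    congr 2
    exact Finset.sum_congr rfl fun i _ => by ring
  rw [hform, sub_nonneg]
  exact sq_sum_le_card_mul_sum_sq

/-- For every `θ ∈ ℝ³`, the symmetric matrix with diagonal `2θᵢ²` and
off-diagonal entries `−θᵢθⱼ` is positive semidefinite; equivalently
`3·Diag(1−θᵢ²) ≼ 3I − θθᵗ` in the Loewner order (the complementary measurement is more
efficient than standard qubit tomography). -/
theorem comp_more_efficient_than_standard (θ : Fin 3 → ℝ) :
    (Matrix.of fun i j : Fin 3 =>
      if i = j then 2 * θ i ^ 2 else -(θ i * θ j) : Matrix (Fin 3) (Fin 3) ℝ).PosSemidef ∧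
    ((3 : ℝ) • (1 : Matrix (Fin 3) (Fin 3) ℝ) - Matrix.vecMulVec θ θ -
      (3 : ℝ) • Matrix.diagonal (fun i => 1 - θ i ^ 2)).PosSemidef := by
  have hpsd := posSemidef_card_smul_diagonal_sq_sub_vecMulVec_self θ
  rw [Fintype.card_fin, Nat.cast_ofNat] at hpsd
  have hgap : (3 : ℝ) • (1 : Matrix (Fin 3) (Fin 3) ℝ) - vecMulVec θ θ -
      (3 : ℝ) • diagonal (fun i => 1 - θ i ^ 2) =
      (3 : ℝ) • diagonal (fun i => θ i ^ 2) - vecMulVec θ θ := by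
    rw [sub_right_comm, ← diagonal_one, ← smul_sub, ← diagonal_sub]
    simp only [sub_sub_cancel]
  have hentries : (of fun i j : Fin 3 => if i = j then 2 * θ i ^ 2 else -(θ i * θ j)) =
      (3 : ℝ) • diagonal (fun i => θ i ^ 2) - vecMulVec θ θ := by
    ext i j
    by_cases hij : i = j
    · subst hij
      simp only [of_apply, ↓reduceIte, Matrix.sub_apply, Matrix.smul_apply, diagonal_apply_eq, smul_eq_mul,
        vecMulVec_apply]
      ring
    · simp [hij, vecMulVec_apply]
  exact ⟨hentries ▸ hpsd, hgap ▸ hpsd⟩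
end

section
/- Let a₁ = (1,1,1)/√3, a₂ = (1,−1,−1)/√3, a₃ = (−1,1,−1)/√3, a₄ = (−1,−1,1)/√3 ∈ ℝ³ and define Fᵢ = ¼(I + aᵢ·σ) for 1 ≤ i ≤ 4, where σ₁, σ₂, σ₃ are the Pauli matrices. Then (i) each Fᵢ is positive semidefinite and Σ_{i=1}^{4} Fᵢ = I, so (F₁, F₂, F₃, F₄) is a POVM; (ii) for every θ ∈ ℝ³ with ‖θ‖ ≤ 1, the outcome probabilities are pᵢ = Tr(Fᵢ ρ_θ) = ¼(1 + aᵢ·θ); and (iii) the estimator Φ^{min}(i) = −I + 6Fᵢ is unbiased: Σ_{i=1}^{4} pᵢ · Φ^{min}(i) = ρ_θ. -/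
open Matrix
open scoped ComplexOrder

/-- The three Pauli matrices. -/
noncomputable def pauliStmt17 : Fin 3 → Matrix (Fin 2) (Fin 2) ℂ :=
  ![!![0, 1; 1, 0], !![0, -Complex.I; Complex.I, 0], !![1, 0; 0, -1]]

/-- The four Bloch vectors of minimal qubit tomography. -/
noncomputable def tetraStmt17 : Fin 4 → Fin 3 → ℝ :=
  fun i => (Real.sqrt 3)⁻¹ • ![![1, 1, 1], ![1, -1, -1], ![-1, 1, -1], ![-1, -1, 1]] i

/-!
Write `B v = v·σ`. The Pauli product rule `B v * B w = (v ⬝ w) I + i B (v × w)` gives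
`(I + B a)² = 2 (I + B a)` for a unit vector `a`, so `I + B a` is positive semidefinite, and
`tr (B v * B w) = 2 (v ⬝ w)` gives the outcome probabilities. The tetrahedron vectors sum to zero
and form a tight frame, `∑ (aᵢ ⬝ θ) aᵢ = (4/3) θ`; hence `∑ pᵢ = 1` and `∑ pᵢ aᵢ = θ / 3`, and since
`-I + 6 Fᵢ = ½ (I + B (3 aᵢ))` the expectation of the estimator is `½ (I + B θ)`.
-/

noncomputable def pauliDot (v : Fin 3 → ℝ) : Matrix (Fin 2) (Fin 2) ℂ :=
  ∑ j, (v j : ℂ) • pauliStmt17 j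

lemma pauliDot_mul_pauliDot (v w : Fin 3 → ℝ) :
    pauliDot v * pauliDot w = ((v ⬝ᵥ w : ℝ) : ℂ) • 1 + Complex.I • pauliDot (v ⨯₃ w) := by
  ext a b
  fin_cases a <;> fin_cases b <;> apply Complex.ext <;>
    simp [pauliDot, pauliStmt17, Fin.sum_univ_three, mul_apply, dotProduct, crossProduct] <;> ring

lemma pauliDot_mul_self (v : Fin 3 → ℝ) : pauliDot v * pauliDot v = ((v ⬝ᵥ v : ℝ) : ℂ) • 1 := by
  rw [pauliDot_mul_pauliDot, cross_self]
  simp [pauliDot]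

lemma conjTranspose_pauliDot (v : Fin 3 → ℝ) : (pauliDot v)ᴴ = pauliDot v := by
  ext a b
  fin_cases a <;> fin_cases b <;> simp [pauliDot, pauliStmt17, Fin.sum_univ_three]

lemma trace_pauliDot (v : Fin 3 → ℝ) : (pauliDot v).trace = 0 := by
  simp [pauliDot, pauliStmt17, Fin.sum_univ_three, trace, Fin.sum_univ_two]

lemma trace_pauliDot_mul_pauliDot (v w : Fin 3 → ℝ) :
    (pauliDot v * pauliDot w).trace = 2 * (v ⬝ᵥ w : ℝ) := by
  simp [pauliDot_mul_pauliDot, trace_pauliDot, mul_comm]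

lemma pauliDot_sum_smul {ι : Type*} (s : Finset ι) (c : ι → ℝ) (v : ι → Fin 3 → ℝ) :
    pauliDot (∑ i ∈ s, c i • v i) = ∑ i ∈ s, (c i : ℂ) • pauliDot (v i) := by
  simp only [pauliDot, Finset.sum_apply, Pi.smul_apply, smul_eq_mul, Complex.ofReal_sum,
    Complex.ofReal_mul, Finset.sum_smul, Finset.smul_sum, smul_smul]
  exact Finset.sum_comm

lemma pauliDot_smul (c : ℝ) (v : Fin 3 → ℝ) : pauliDot (c • v) = (c : ℂ) • pauliDot v := by
  simpa using pauliDot_sum_smul {()} (fun _ => c) (fun _ => v)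

lemma pauliDot_zero : pauliDot 0 = 0 := by
  simp [pauliDot]

lemma posSemidef_one_add_pauliDot {v : Fin 3 → ℝ} (hv : v ⬝ᵥ v = 1) :
    (1 + pauliDot v).PosSemidef := by
  have h : 1 + pauliDot v = (1 / 2 : ℂ) • ((1 + pauliDot v)ᴴ * (1 + pauliDot v)) := by
    simp only [conjTranspose_add, conjTranspose_one, conjTranspose_pauliDot, add_mul, mul_add,
      one_mul, mul_one, pauliDot_mul_self, hv, Complex.ofReal_one, one_smul]
    module
  rw [h]
  exact (posSemidef_conjTranspose_mul_self _).smul (by norm_num [Complex.nonneg_iff])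

lemma trace_one_add_pauliDot_mul (v w : Fin 3 → ℝ) :
    ((1 + pauliDot v) * (1 + pauliDot w)).trace = 2 * (1 + v ⬝ᵥ w : ℝ) := by
  simp [add_mul, mul_add, trace_add, trace_pauliDot, trace_pauliDot_mul_pauliDot]

lemma sum_smul_one_add_pauliDot {ι : Type*} (s : Finset ι) (p : ι → ℝ) (a : ι → Fin 3 → ℝ) :
    ∑ i ∈ s, (p i : ℂ) • (1 + pauliDot (a i)) =
      ((∑ i ∈ s, p i : ℝ) : ℂ) • 1 + pauliDot (∑ i ∈ s, p i • a i) := by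
  simp [smul_add, Finset.sum_add_distrib, Finset.sum_smul, pauliDot_sum_smul]

lemma tetraStmt17_dotProduct_self (i : Fin 4) : tetraStmt17 i ⬝ᵥ tetraStmt17 i = 1 := by
  fin_cases i <;> simp [tetraStmt17, dotProduct, Fin.sum_univ_three] <;> ring_nf <;> norm_num

lemma sum_tetraStmt17 : ∑ i, tetraStmt17 i = 0 := by
  ext j
  fin_cases j <;> simp [tetraStmt17, Fin.sum_univ_four]

lemma sum_tetraStmt17_dotProduct_smul (θ : Fin 3 → ℝ) :
    ∑ i, (tetraStmt17 i ⬝ᵥ θ) • tetraStmt17 i = (4 / 3 : ℝ) • θ := by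
  ext j
  fin_cases j <;> simp [tetraStmt17, dotProduct, Fin.sum_univ_four, Fin.sum_univ_three] <;>
    ring_nf <;> norm_num <;> ring

lemma sum_tetraStmt17_prob (θ : Fin 3 → ℝ) : ∑ i, (1 + tetraStmt17 i ⬝ᵥ θ) / 4 = 1 := by
  simp [← Finset.sum_div, Finset.sum_add_distrib, ← sum_dotProduct, sum_tetraStmt17]

lemma sum_tetraStmt17_prob_smul (θ : Fin 3 → ℝ) :
    ∑ i, ((1 + tetraStmt17 i ⬝ᵥ θ) / 4) • tetraStmt17 i = (1 / 3 : ℝ) • θ := by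
  calc ∑ i, ((1 + tetraStmt17 i ⬝ᵥ θ) / 4) • tetraStmt17 i
      = (1 / 4 : ℝ) • (∑ i, tetraStmt17 i + ∑ i, (tetraStmt17 i ⬝ᵥ θ) • tetraStmt17 i) := by
        rw [← Finset.sum_add_distrib, Finset.smul_sum]
        refine Finset.sum_congr rfl fun i _ => ?_
        module
    _ = (1 / 3 : ℝ) • θ := by
        rw [sum_tetraStmt17, sum_tetraStmt17_dotProduct_smul, zero_add, smul_smul]
        norm_num

lemma sum_tetraStmt17_povm : ∑ i, (1 / 4 : ℂ) • (1 + pauliDot (tetraStmt17 i)) = 1 := by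
  have h := sum_smul_one_add_pauliDot Finset.univ (fun _ => (1 : ℝ)) tetraStmt17
  simp only [Complex.ofReal_one, one_smul, Finset.sum_const, Finset.card_univ, Fintype.card_fin,
    sum_tetraStmt17, pauliDot_zero, add_zero] at h
  rw [← Finset.smul_sum, h]
  module

lemma tetraStmt17_estimator_unbiased (θ : Fin 3 → ℝ) :
    ∑ i, (((1 + tetraStmt17 i ⬝ᵥ θ) / 4 : ℝ) : ℂ) •
        (-1 + (6 : ℂ) • ((1 / 4 : ℂ) • (1 + pauliDot (tetraStmt17 i)))) =
      (1 / 2 : ℂ) • (1 + pauliDot θ) := by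
  have h : ∀ a, -1 + (6 : ℂ) • ((1 / 4 : ℂ) • (1 + pauliDot a)) =
      (1 / 2 : ℂ) • (1 + pauliDot ((3 : ℝ) • a)) := by
    intro a
    rw [pauliDot_smul]
    push_cast
    module
  simp_rw [h, smul_comm _ (1 / 2 : ℂ), ← Finset.smul_sum, sum_smul_one_add_pauliDot,
    sum_tetraStmt17_prob, Complex.ofReal_one, one_smul]
  simp_rw [smul_comm _ (3 : ℝ), ← Finset.smul_sum, sum_tetraStmt17_prob_smul, smul_smul]
  norm_num

/-- the minimal qubit tomography operators `Fᵢ = ¼(I + aᵢ·σ)` form a POVM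
(positive semidefinite, summing to `I`), the outcome probabilities in the state
`ρ_θ = ½(I + θ·σ)` are `Tr(Fᵢρ_θ) = ¼(1 + aᵢ·θ)`, and the estimator `Φ^min(i) = −I + 6Fᵢ`
is unbiased: `Σᵢ pᵢ Φ^min(i) = ρ_θ`. -/
theorem minimal_tomography_povm_unbiased
    (F : Fin 4 → Matrix (Fin 2) (Fin 2) ℂ)
    (hF : ∀ i, F i = (1 / 4 : ℂ) • (1 + ∑ j, ((tetraStmt17 i j : ℝ) : ℂ) • pauliStmt17 j)) :
    (∀ i, (F i).PosSemidef) ∧ (∑ i, F i = 1) ∧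
    ∀ θ : EuclideanSpace ℝ (Fin 3), ‖θ‖ ≤ 1 →
      (∀ i, (F i * ((1 / 2 : ℂ) • (1 + ∑ j, (θ j : ℂ) • pauliStmt17 j))).trace =
        (((1 + ∑ j, tetraStmt17 i j * θ j) / 4 : ℝ) : ℂ)) ∧
      (∑ i, (((1 + ∑ j, tetraStmt17 i j * θ j) / 4 : ℝ) : ℂ) • (-1 + (6 : ℂ) • F i) =
        (1 / 2 : ℂ) • (1 + ∑ j, (θ j : ℂ) • pauliStmt17 j)) := by
  have hσ : ∀ v : Fin 3 → ℝ, ∑ j, (v j : ℂ) • pauliStmt17 j = pauliDot v := fun _ => rfl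
  have hdot : ∀ v w : Fin 3 → ℝ, ∑ j, v j * w j = v ⬝ᵥ w := fun _ _ => rfl
  simp only [hσ, hdot] at hF ⊢
  simp only [hF]
  refine ⟨fun i => ?_, sum_tetraStmt17_povm,
    fun θ _ => ⟨fun i => ?_, tetraStmt17_estimator_unbiased θ⟩⟩
  · exact (posSemidef_one_add_pauliDot (tetraStmt17_dotProduct_self i)).smul
      (by norm_num [Complex.nonneg_iff])
  · rw [smul_mul_smul_comm, trace_smul, trace_one_add_pauliDot_mul]
    push_cast
    ring
end

section
/- There exists θ ∈ ℝ³ with ‖θ‖ ≤ 1 such that the difference M^{min}(θ) − 3·Diag(1−θ₁², 1−θ₂², 1−θ₃²) is indefinite, i.e. neither positive semidefinite nor negative semidefinite; here M^{min}(θ) is the 3×3 symmetric matrix with diagonal entries 3 − θᵢ² and off-diagonal entries √3·θ₃ − θ₁θ₂, √3·θ₂ − θ₁θ₃, √3·θ₁ − θ₂θ₃ in positions (1,2), (1,3), (2,3). (For instance θ = (t, 0, 0) with 0 < t ≤ 1 works.) Hence the mean quadratic error matrices of minimal qubit tomography and of the complementary measurement scheme are not comparable in the Loewner order. -/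
/-!
At `θ = (t, 0, 0)` the difference `D = M^min(θ) − 3·Diag(1 − θᵢ²)` has diagonal `(2t², 0, 0)`
and entry `√3·t` at positions `(2,3)` and `(3,2)` (indices `1, 2` in `Fin 3`). The positive
diagonal entry rules out `D ≤ 0`, and the principal `2 × 2` minor on rows `2, 3`, equal to
`−3t²`, rules out `D ≥ 0`.
-/

open Matrix

theorem Matrix.PosSemidef.apply_sq_le_mul_diag {n : Type*} [Fintype n] {A : Matrix n n ℝ}
    (hA : A.PosSemidef) (i j : n) : A i j ^ 2 ≤ A i i * A j j := by
  have hminor := (hA.submatrix ![i, j]).det_nonneg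
  have hsymm : A j i = A i j := hA.isHermitian.apply i j
  simp only [det_fin_two, submatrix_apply, Matrix.cons_val_zero, Matrix.cons_val_one] at hminor
  rw [hsymm, ← sq] at hminor
  linarith

namespace QubitTomography

/- `n` times the mean quadratic error matrices of minimal tomography and of the complementary
scheme after `n` measurements. -/
noncomputable def minMQE (θ : EuclideanSpace ℝ (Fin 3)) : Matrix (Fin 3) (Fin 3) ℝ :=
  Matrix.of
    ![![3 - θ 0 ^ 2, Real.sqrt 3 * θ 2 - θ 0 * θ 1, Real.sqrt 3 * θ 1 - θ 0 * θ 2],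
      ![Real.sqrt 3 * θ 2 - θ 0 * θ 1, 3 - θ 1 ^ 2, Real.sqrt 3 * θ 0 - θ 1 * θ 2],
      ![Real.sqrt 3 * θ 1 - θ 0 * θ 2, Real.sqrt 3 * θ 0 - θ 1 * θ 2, 3 - θ 2 ^ 2]]

def compMQE (θ : EuclideanSpace ℝ (Fin 3)) : Matrix (Fin 3) (Fin 3) ℝ :=
  (3 : ℝ) • Matrix.diagonal (fun i : Fin 3 => 1 - θ i ^ 2)

theorem minMQE_sub_compMQE_apply_self (θ : EuclideanSpace ℝ (Fin 3)) (i : Fin 3) :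
    (minMQE θ - compMQE θ) i i = 2 * θ i ^ 2 := by
  fin_cases i <;> simp [minMQE, compMQE] <;> ring

theorem not_posSemidef_compMQE_sub_minMQE {θ : EuclideanSpace ℝ (Fin 3)} (hθ : θ ≠ 0) :
    ¬ (compMQE θ - minMQE θ).PosSemidef := by
  obtain ⟨i, hi⟩ : ∃ i, θ i ≠ 0 := by
    by_contra! h
    exact hθ (by ext i; simp [h])
  intro h
  have hdiag := h.diag_nonneg (i := i)
  rw [← neg_sub, neg_apply, minMQE_sub_compMQE_apply_self] at hdiag
  have : 0 < θ i ^ 2 := by positivity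
  linarith

theorem not_posSemidef_minMQE_sub_compMQE_single {t : ℝ} (ht : t ≠ 0) :
    ¬ (minMQE (EuclideanSpace.single 0 t) - compMQE (EuclideanSpace.single 0 t)).PosSemidef := by
  intro h
  exact ht (by simpa [minMQE, compMQE] using h.apply_sq_le_mul_diag 1 2)

end QubitTomography

open QubitTomography in
/-- there is a Bloch vector `θ`, `‖θ‖ ≤ 1`, for which the difference
`M^min(θ) − 3·Diag(1−θᵢ²)` between the mean quadratic error matrices of minimal qubit
tomography and of the complementary scheme is indefinite: neither it nor its negative is
positive semidefinite, so the two schemes are not comparable in the Loewner order. -/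
theorem min_and_comp_mqe_not_comparable :
    ∃ θ : EuclideanSpace ℝ (Fin 3), ‖θ‖ ≤ 1 ∧
      ¬ (Matrix.of
          ![![3 - θ 0 ^ 2, Real.sqrt 3 * θ 2 - θ 0 * θ 1, Real.sqrt 3 * θ 1 - θ 0 * θ 2],
            ![Real.sqrt 3 * θ 2 - θ 0 * θ 1, 3 - θ 1 ^ 2, Real.sqrt 3 * θ 0 - θ 1 * θ 2],
            ![Real.sqrt 3 * θ 1 - θ 0 * θ 2, Real.sqrt 3 * θ 0 - θ 1 * θ 2, 3 - θ 2 ^ 2]] -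
          (3 : ℝ) • Matrix.diagonal (fun i : Fin 3 => 1 - θ i ^ 2)).PosSemidef ∧
      ¬ ((3 : ℝ) • Matrix.diagonal (fun i : Fin 3 => 1 - θ i ^ 2) -
          Matrix.of
          ![![3 - θ 0 ^ 2, Real.sqrt 3 * θ 2 - θ 0 * θ 1, Real.sqrt 3 * θ 1 - θ 0 * θ 2],
            ![Real.sqrt 3 * θ 2 - θ 0 * θ 1, 3 - θ 1 ^ 2, Real.sqrt 3 * θ 0 - θ 1 * θ 2],
            ![Real.sqrt 3 * θ 1 - θ 0 * θ 2, Real.sqrt 3 * θ 0 - θ 1 * θ 2, 3 - θ 2 ^ 2]]).PosSemidef :=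
  ⟨EuclideanSpace.single 0 1, by simp, not_posSemidef_minMQE_sub_compMQE_single one_ne_zero,
    not_posSemidef_compMQE_sub_minMQE (by simp)⟩
end
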